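/- arXiv:0907.4340 — 10 statements merged into one kernel-verified Lean document; each statement's English description precedes it below -/
import Mathlib

section
/- Let ≼ be a Conradian left-invariant order on a group G. For every positive g ∈ G, the set S_g = {f ∈ G : fⁿ ≺ g for all n ∈ ℤ} is a convex subgroup of G. -/
/-!
If `f * g ^ 2 ≤ g` for some `f, g > 1`, then all powers of `f * g` stay below `g`, contradicting
the Conrad property for `f` and `f * g`. Hence `g < f * g ^ 2`, which makes right multiplication
monotone up to squaring: `x ≤ z` and `1 ≤ y` give `x * y ≤ z * y ^ 2`. Consequently, if `x` lies
below a power of `c ≥ 1`, so does every power of `x`; for `c ∈ S_g` this puts `x` and `x⁻¹`, hence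
`x`, in `S_g`. For `a, b ∈ S_g` both `a * b` and `b⁻¹ * a⁻¹` lie below `c ^ 3` with
`c = max |a|ₘ |b|ₘ`, and an element `h` between `f₁, f₂ ∈ S_g` lies, together with `h⁻¹`, below
`f₂` (if `h ≥ 1`) or below `f₁⁻¹ ^ 2` (if `h ≤ 1`).
-/

def IsConradian (G : Type*) [Group G] [LinearOrder G] : Prop :=
  ∀ f g : G, 1 < f → 1 < g → ∃ n : ℕ, 0 < n ∧ g < f * g ^ n

def Sg {G : Type*} [Group G] [LinearOrder G] (g : G) : Set G :=
  {f : G | ∀ n : ℤ, f ^ n < g}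

section Group

variable {G : Type*} [Group G] [LinearOrder G] {g : G}

theorem one_mem_Sg (hg : 1 < g) : (1 : G) ∈ Sg g := fun n => by simpa using hg

theorem inv_mem_Sg {f : G} (hf : f ∈ Sg g) : f⁻¹ ∈ Sg g := fun n => by
  simpa [inv_zpow'] using hf (-n)

theorem mabs_mem_Sg {a : G} (ha : a ∈ Sg g) : |a|ₘ ∈ Sg g :=
  max_rec' (· ∈ Sg g) ha (inv_mem_Sg ha)

variable [MulLeftMono G]

theorem one_le_mabs_of_mulLeftMono (a : G) : 1 ≤ |a|ₘ := by
  rcases le_total 1 a with ha | ha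
  · exact ha.trans (le_mabs_self a)
  · exact (Left.one_le_inv_iff.2 ha).trans (inv_le_mabs a)

namespace IsConradian

theorem lt_mul_sq (hC : IsConradian G) {f g : G} (hf : 1 < f) (hg : 1 < g) : g < f * g ^ 2 := by
  by_contra! hle
  replace hle : (f * g) * g ≤ g := by rwa [mul_assoc, ← sq]
  have hpow : ∀ k : ℕ, (f * g) ^ k * g ≤ g := by
    intro k
    induction k with
    | zero => simp
    | succ k ih =>
      calc (f * g) ^ (k + 1) * g = (f * g) * ((f * g) ^ k * g) := by rw [pow_succ', mul_assoc]
        _ ≤ (f * g) * g := mul_le_mul_right ih _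
        _ ≤ g := hle
  obtain ⟨n, -, hn⟩ := hC f (f * g) hf (one_lt_mul_of_lt_of_le' hf hg.le)
  have hgn : g < (f * g) ^ n := lt_of_mul_lt_mul_left' hn
  exact (hgn.trans_le (le_mul_of_one_le_right' hg.le)).not_ge (hpow n)

theorem le_mul_sq (hC : IsConradian G) {f g : G} (hf : 1 ≤ f) (hg : 1 ≤ g) : g ≤ f * g ^ 2 := by
  rcases hf.eq_or_lt with rfl | hf
  · simpa [sq] using le_mul_of_one_le_right' (a := g) hg
  rcases hg.eq_or_lt with rfl | hg
  · simpa using hf.le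
  exact (hC.lt_mul_sq hf hg).le

theorem mul_le_mul_sq (hC : IsConradian G) {x y z : G} (hxz : x ≤ z) (hy : 1 ≤ y) :
    x * y ≤ z * y ^ 2 :=
  calc x * y ≤ x * (x⁻¹ * z * y ^ 2) :=
        mul_le_mul_right (hC.le_mul_sq (le_inv_mul_iff_mul_le.2 (by simpa using hxz)) hy) _
    _ = z * y ^ 2 := by group

theorem mul_le_pow_three (hC : IsConradian G) {x y c : G} (hx : x ≤ c) (hy : y ≤ c)
    (hc : 1 ≤ c) : x * y ≤ c ^ 3 :=
  calc x * y ≤ x * c := mul_le_mul_right hy _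
    _ ≤ c * c ^ 2 := hC.mul_le_mul_sq hx hc
    _ = c ^ 3 := (pow_succ' c 2).symm

theorem exists_pow_le_pow (hC : IsConradian G) {x c : G} {j : ℕ} (hc : 1 ≤ c)
    (hx : x ≤ c ^ j) (m : ℕ) : ∃ N : ℕ, x ^ m ≤ c ^ N := by
  induction m with
  | zero => exact ⟨0, by simp⟩
  | succ m ih =>
    obtain ⟨N, hN⟩ := ih
    refine ⟨j + N * 2, ?_⟩
    calc x ^ (m + 1) = x * x ^ m := pow_succ' x m
      _ ≤ x * c ^ N := mul_le_mul_right hN _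
      _ ≤ c ^ j * (c ^ N) ^ 2 := hC.mul_le_mul_sq hx (one_le_pow_of_one_le' hc N)
      _ = c ^ (j + N * 2) := by rw [← pow_mul, ← pow_add]

end IsConradian

theorem mem_Sg_of_le_pow (hC : IsConradian G) {c x : G} {j : ℕ} (hc : c ∈ Sg g) (hc1 : 1 ≤ c)
    (hx : x ≤ c ^ j) (hx' : x⁻¹ ≤ c ^ j) : x ∈ Sg g := by
  have hpow : ∀ y : G, y ≤ c ^ j → ∀ m : ℕ, y ^ m < g := fun y hy m => by
    obtain ⟨N, hN⟩ := hC.exists_pow_le_pow hc1 hy m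
    exact hN.trans_lt (by simpa using hc N)
  intro n
  obtain ⟨m, rfl | rfl⟩ := Int.eq_nat_or_neg n
  · simpa using hpow x hx m
  · simpa [zpow_neg, inv_pow] using hpow x⁻¹ hx' m

theorem mul_mem_Sg (hC : IsConradian G) {a b : G} (ha : a ∈ Sg g) (hb : b ∈ Sg g) :
    a * b ∈ Sg g := by
  set c := max |a|ₘ |b|ₘ
  have hc : c ∈ Sg g := max_rec' (· ∈ Sg g) (mabs_mem_Sg ha) (mabs_mem_Sg hb)
  have hc1 : 1 ≤ c := (one_le_mabs_of_mulLeftMono a).trans (le_max_left _ _)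
  have hac : a ≤ c := (le_mabs_self a).trans (le_max_left _ _)
  have hbc : b ≤ c := (le_mabs_self b).trans (le_max_right _ _)
  have hac' : a⁻¹ ≤ c := (inv_le_mabs a).trans (le_max_left _ _)
  have hbc' : b⁻¹ ≤ c := (inv_le_mabs b).trans (le_max_right _ _)
  refine mem_Sg_of_le_pow hC hc hc1 (hC.mul_le_pow_three hac hbc hc1) ?_
  rw [mul_inv_rev]
  exact hC.mul_le_pow_three hbc' hac' hc1

theorem ordConnected_Sg (hC : IsConradian G) (g : G) : (Sg g).OrdConnected := by
  refine ⟨fun f₁ hf₁ f₂ hf₂ h ⟨hl, hr⟩ => ?_⟩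
  rcases le_total 1 h with hh | hh
  · exact mem_Sg_of_le_pow hC (j := 1) hf₂ (hh.trans hr) (by simpa using hr)
      (by simpa using (inv_le_one'.2 hh).trans (hh.trans hr))
  · have hc1 : 1 ≤ f₁⁻¹ := Left.one_le_inv_iff.2 (hl.trans hh)
    refine mem_Sg_of_le_pow hC (inv_mem_Sg hf₁) hc1 (hh.trans (one_le_pow_of_one_le' hc1 2)) ?_
    calc h⁻¹ = (h⁻¹ * f₁) * f₁⁻¹ := by group
      _ ≤ 1 * f₁⁻¹ ^ 2 := hC.mul_le_mul_sq (inv_mul_le_one_iff.2 hl) hc1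
      _ = f₁⁻¹ ^ 2 := one_mul _

end Group

/-- For a Conradian left-invariant order ≼ on G and any positive g,
the set S_g = {f : fⁿ ≺ g for all n ∈ ℤ} is a convex subgroup. -/
theorem Sg_convex_subgroup {G : Type*} [Group G] [LinearOrder G]
    (hleft : ∀ f a b : G, a ≤ b → f * a ≤ f * b)
    (hC : ∀ f g : G, 1 < f → 1 < g → ∃ n : ℕ, 0 < n ∧ g < f * g ^ n)
    (g : G) (hg : 1 < g) :
    ∃ H : Subgroup G, ((H : Set G) = {f : G | ∀ n : ℤ, f ^ n < g}) ∧
      (∀ f₁ f₂ h : G, f₁ ∈ H → f₂ ∈ H → f₁ < h → h < f₂ → h ∈ H) := by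
  have : MulLeftMono G := ⟨fun f _ _ h => hleft f _ _ h⟩
  refine ⟨{ carrier := Sg g
            one_mem' := one_mem_Sg hg
            mul_mem' := mul_mem_Sg hC
            inv_mem' := inv_mem_Sg }, rfl, ?_⟩
  exact fun f₁ f₂ h h₁ h₂ hl hr => (ordConnected_Sg hC g).out h₁ h₂ ⟨hl.le, hr.le⟩
end

section
/- Let ≼ be a Conradian left-invariant order on a group G and suppose 1 ≺ g ≺ f. Then there exists n ∈ ℕ such that g⁻¹·fⁿ·g ≻ f. -/
theorem exists_lt_inv_mul_pow_mul_of_conradian {G : Type*} [Group G] [PartialOrder G]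
    [MulLeftMono G] (hC : ∀ f g : G, 1 < f → 1 < g → ∃ n : ℕ, 0 < n ∧ g < f * g ^ n)
    {f g : G} (hg : 1 < g) (hgf : g < f) :
    ∃ n : ℕ, 0 < n ∧ f < g⁻¹ * f ^ n * g := by
  obtain ⟨n, -, hn⟩ := hC (g⁻¹ * f) f (lt_inv_mul_iff_lt.2 hgf) (hg.trans hgf)
  refine ⟨n + 1, n.succ_pos, ?_⟩
  calc f < g⁻¹ * f * f ^ n := hn
    _ = g⁻¹ * f ^ (n + 1) := by rw [mul_assoc, ← pow_succ']
    _ < g⁻¹ * f ^ (n + 1) * g := lt_mul_of_one_lt_right' _ hg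

/-- If ≼ is Conradian and 1 ≺ g ≺ f, then g⁻¹·fⁿ·g ≻ f for some n ∈ ℕ. -/
theorem conradian_conjugate {G : Type*} [Group G] [LinearOrder G]
    (hleft : ∀ f a b : G, a ≤ b → f * a ≤ f * b)
    (hC : ∀ f g : G, 1 < f → 1 < g → ∃ n : ℕ, 0 < n ∧ g < f * g ^ n)
    (f g : G) (h1 : 1 < g) (h2 : g < f) :
    ∃ n : ℕ, 0 < n ∧ f < g⁻¹ * f ^ n * g :=
  have : MulLeftMono G := ⟨fun c _ _ h => hleft c _ _ h⟩
  exists_lt_inv_mul_pow_mul_of_conradian hC h1 h2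
end

section
/- Let ≼ be a Conradian left-invariant order on a group G, and let H ⊆ K be convex subgroups of G such that the pair (H, K) is a convex jump (H is the maximal convex subgroup not containing some element g, and K is the minimal convex subgroup containing g). Then H is normal in K. -/
/-!
Suppose `c = k h k⁻¹ ∉ H` with `k ∈ K`, `h ∈ H`, and `1 < c` (otherwise use `c⁻¹`). Then `c` fixes the
coset `kH` while `c ^ n H` increases strictly with `n`, because `H` is convex; so `kH` lies above
every `c ^ n H` or below every `c ^ (-n) H`. On the other hand, the Conrad property makes the
elements lying between two powers of `c` a subgroup, which is convex and contains `c`. It is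
therefore not contained in `H`, so by maximality of `H` it contains `g`, hence `K` by minimality of
`K`, and `k` lies between two powers of `c`.
-/

def IsConvexSubgroup {G : Type*} [Group G] [LinearOrder G] (H : Subgroup G) : Prop :=
  ∀ f₁ f₂ h : G, f₁ ∈ H → f₂ ∈ H → f₁ < h → h < f₂ → h ∈ H

class IsConradian_s3 (G : Type*) [Group G] [LinearOrder G] : Prop where
  exists_lt_mul_pow : ∀ f g : G, 1 < f → 1 < g → ∃ n : ℕ, g < f * g ^ n

theorem Subgroup.notMem_of_conj_mem {G : Type*} [Group G] {H : Subgroup G} {c v : G} (hc : c ∉ H)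
    (hv : v⁻¹ * c * v ∈ H) : v ∉ H := fun hvH =>
  hc <| by simpa [mul_assoc] using H.mul_mem (H.mul_mem hvH hv) (H.inv_mem hvH)

namespace IsConvexSubgroup

variable {G : Type*} [Group G] [LinearOrder G] {H : Subgroup G} {a v w : G}

theorem lt_of_notMem (hH : IsConvexSubgroup H) (hw : w ∉ H) (hw1 : 1 < w) (ha : a ∈ H) :
    a < w :=
  lt_of_not_ge fun hwa => hw <| hwa.lt_or_eq.elim (hH 1 a w H.one_mem ha hw1) (· ▸ ha)

theorem gt_of_notMem (hH : IsConvexSubgroup H) (hw : w ∉ H) (hw1 : w < 1) (ha : a ∈ H) :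
    w < a :=
  lt_of_not_ge fun haw => hw <| haw.lt_or_eq.elim (hH a 1 w ha H.one_mem · hw1) (· ▸ ha)

variable [MulLeftMono G]

theorem one_lt_mul_of_notMem (hH : IsConvexSubgroup H) (hv : v ∉ H) (hv1 : 1 < v)
    (ha : a ∈ H) : 1 < v * a :=
  inv_lt_iff_one_lt_mul'.1 <|
    hH.gt_of_notMem (H.inv_mem_iff.not.2 hv) (Left.inv_lt_one_iff.2 hv1) ha

theorem mul_lt_one_of_notMem (hH : IsConvexSubgroup H) (hv : v ∉ H) (hv1 : v < 1)
    (ha : a ∈ H) : v * a < 1 :=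
  lt_inv_iff_mul_lt_one'.1 <|
    hH.lt_of_notMem (H.inv_mem_iff.not.2 hv) (Left.one_lt_inv_iff.2 hv1) ha

theorem pow_lt_of_conj_mem (hH : IsConvexSubgroup H) {c : G} (hc : c ∉ H) (hv1 : 1 < v)
    (hv : v⁻¹ * c * v ∈ H) (i : ℕ) : c ^ i < v := by
  induction i generalizing v with
  | zero => simpa using hv1
  | succ i ih =>
    have hcv : 1 < c⁻¹ * v := by
      simpa [mul_assoc] using
        hH.one_lt_mul_of_notMem (H.notMem_of_conj_mem hc hv) hv1 (H.inv_mem hv)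
    have hconj : (c⁻¹ * v)⁻¹ * c * (c⁻¹ * v) = v⁻¹ * c * v := by group
    rw [pow_succ', ← lt_inv_mul_iff_mul_lt]
    exact ih hcv (hconj ▸ hv)

theorem pow_mul_lt_one_of_conj_mem (hH : IsConvexSubgroup H) {c : G} (hc : c ∉ H) (hv1 : v < 1)
    (hv : v⁻¹ * c * v ∈ H) (i : ℕ) : c ^ i * v < 1 := by
  induction i generalizing v with
  | zero => simpa using hv1
  | succ i ih =>
    have hcv : c * v < 1 := by
      simpa [mul_assoc] using hH.mul_lt_one_of_notMem (H.notMem_of_conj_mem hc hv) hv1 hv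
    have hconj : (c * v)⁻¹ * c * (c * v) = v⁻¹ * c * v := by group
    rw [pow_succ, mul_assoc]
    exact ih hcv (hconj ▸ hv)

end IsConvexSubgroup

section Conradian

variable {G : Type*} [Group G] [LinearOrder G] [MulLeftMono G] [IsConradian_s3 G] {a c s x : G}
  {n : ℕ}

theorem exists_pow_lt_mul_pow (hc : 1 < c) (ha : 1 < a) (q : ℕ) : ∃ M : ℕ, c ^ q < a * c ^ M := by
  induction q with
  | zero => exact ⟨0, by simpa using ha⟩
  | succ q ih =>
    obtain ⟨M, hM⟩ := ih
    have hb : 1 < (c ^ q)⁻¹ * (a * c ^ M) := lt_inv_mul_iff_mul_lt.2 (by simpa using hM)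
    obtain ⟨k, hk⟩ := IsConradian_s3.exists_lt_mul_pow _ c hb hc
    refine ⟨M + k, ?_⟩
    calc c ^ (q + 1) = c ^ q * c := pow_succ c q
      _ < c ^ q * ((c ^ q)⁻¹ * (a * c ^ M) * c ^ k) := mul_lt_mul_right hk _
      _ = a * c ^ (M + k) := by group

theorem exists_one_lt_pow_mul_mul_inv (hc : 1 < c) (hs : 1 < s) :
    ∃ P : ℕ, 1 < c ^ P * s * c⁻¹ := by
  by_contra! h
  have hρ : ∀ P : ℕ, 1 < c * s⁻¹ * (c ^ P)⁻¹ := fun P => by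
    have hle : c ^ P * s * c⁻¹ ≤ c⁻¹ := by
      rw [le_inv_iff_mul_le_one_left]
      simpa [pow_succ', mul_assoc] using h (P + 1)
    simpa [mul_assoc] using Left.one_lt_inv_iff.2 (hle.trans_lt (Left.inv_lt_one_iff.2 hc))
  -- `ρ 2 * ρ 1 ^ n = ρ 1 * (c * s ^ n)⁻¹` for `ρ P = c * s⁻¹ * (c ^ P)⁻¹`, so the Conrad
  -- property for `ρ 2, ρ 1` forces `c * s ^ n < 1`.
  obtain ⟨n, hn⟩ := IsConradian_s3.exists_lt_mul_pow _ _ (hρ 2) (hρ 1)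
  have hsplit : c * s⁻¹ * (c ^ 2)⁻¹ * (c * s⁻¹ * (c ^ 1)⁻¹) ^ n
      = c * s⁻¹ * (c ^ 1)⁻¹ * (c * s ^ n)⁻¹ := by
    rw [pow_one, conj_pow]
    group
  rw [hsplit, lt_mul_iff_one_lt_right', Left.one_lt_inv_iff] at hn
  exact hn.not_gt (one_lt_mul_of_lt_of_le' hc (one_le_pow_of_one_le' hs.le n))

theorem exists_one_lt_pow_mul_mul_inv_pow (hc : 1 < c) (hs : 1 < s) (m : ℕ) :
    ∃ P : ℕ, 1 < c ^ P * s * (c ^ m)⁻¹ := by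
  induction m with
  | zero => exact ⟨0, by simpa using hs⟩
  | succ m ih =>
    obtain ⟨P, hP⟩ := ih
    obtain ⟨Q, hQ⟩ := exists_one_lt_pow_mul_mul_inv hc hP
    exact ⟨Q + P, by convert hQ using 1; group⟩

theorem exists_mul_pow_lt_pow (hc : 1 < c) (hx : x < c ^ n) (m : ℕ) :
    ∃ N : ℕ, x * c ^ m < c ^ N := by
  obtain ⟨M, hM⟩ := exists_pow_lt_mul_pow hc (lt_inv_mul_iff_mul_lt.2 (by simpa using hx)) m
  exact ⟨n + M, by simpa [pow_add, mul_assoc] using mul_lt_mul_right hM x⟩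

theorem exists_inv_lt_pow (hc : 1 < c) (hx : (c ^ n)⁻¹ < x) : ∃ M : ℕ, x⁻¹ < c ^ M := by
  obtain ⟨M, hM⟩ := exists_pow_lt_mul_pow hc (inv_lt_iff_one_lt_mul'.1 hx) n
  exact ⟨M, inv_lt_iff_one_lt_mul'.2 (by simpa [mul_assoc] using hM)⟩

theorem exists_inv_pow_lt_mul_inv_pow (hc : 1 < c) (hx : (c ^ n)⁻¹ < x) (m : ℕ) :
    ∃ N : ℕ, (c ^ N)⁻¹ < x * (c ^ m)⁻¹ := by
  obtain ⟨P, hP⟩ := exists_one_lt_pow_mul_mul_inv_pow hc (inv_lt_iff_one_lt_mul'.1 hx) m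
  exact ⟨P + n, inv_lt_iff_one_lt_mul'.2 (by simpa [pow_add, mul_assoc] using hP)⟩

theorem exists_inv_pow_lt_inv (hc : 1 < c) (hx : x < c ^ n) : ∃ M : ℕ, (c ^ M)⁻¹ < x⁻¹ := by
  obtain ⟨P, hP⟩ :=
    exists_one_lt_pow_mul_mul_inv_pow hc (lt_inv_mul_iff_mul_lt.2 (by simpa using hx)) n
  exact ⟨P, inv_lt_iff_one_lt_mul'.2 (by simpa [mul_assoc] using hP)⟩

variable (c) in
def zpowersConvexHull (hc : 1 < c) : Subgroup G where
  carrier := {x | (∃ m : ℕ, (c ^ m)⁻¹ < x) ∧ ∃ n : ℕ, x < c ^ n}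
  one_mem' := ⟨⟨1, by simpa using hc⟩, ⟨1, by simpa using hc⟩⟩
  inv_mem' := fun ⟨⟨_, hlo⟩, ⟨_, hhi⟩⟩ =>
    ⟨exists_inv_pow_lt_inv hc hhi, exists_inv_lt_pow hc hlo⟩
  mul_mem' := by
    rintro x z ⟨⟨_, hxlo⟩, ⟨_, hxhi⟩⟩ ⟨⟨mz, hzlo⟩, ⟨nz, hzhi⟩⟩
    obtain ⟨N, hN⟩ := exists_inv_pow_lt_mul_inv_pow hc hxlo mz
    obtain ⟨N', hN'⟩ := exists_mul_pow_lt_pow hc hxhi nz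
    exact ⟨⟨N, hN.trans (mul_lt_mul_right hzlo x)⟩, ⟨N', (mul_lt_mul_right hzhi x).trans hN'⟩⟩

theorem isConvexSubgroup_zpowersConvexHull (hc : 1 < c) :
    IsConvexSubgroup (zpowersConvexHull c hc) :=
  fun _ _ _ ⟨hlo, _⟩ ⟨_, hhi⟩ h₁ h₂ =>
    ⟨hlo.imp fun _ h => h.trans h₁, hhi.imp fun _ h => h₂.trans h⟩

theorem self_mem_zpowersConvexHull (hc : 1 < c) : c ∈ zpowersConvexHull c hc :=
  ⟨⟨0, by simpa using hc⟩, ⟨2, by simpa [pow_two] using lt_mul_of_one_lt_right' c hc⟩⟩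

end Conradian

theorem convex_jump_normal_general {G : Type*} [Group G] [LinearOrder G]
    (hleft : ∀ f a b : G, a ≤ b → f * a ≤ f * b)
    (hC : ∀ f g : G, 1 < f → 1 < g → ∃ n : ℕ, 0 < n ∧ g < f * g ^ n)
    (g : G) (H K : Subgroup G)
    (hHconv : IsConvexSubgroup H)
    (hHmax : ∀ C : Subgroup G, IsConvexSubgroup C → g ∉ C → C ≤ H)
    (hKmin : ∀ C : Subgroup G, IsConvexSubgroup C → g ∈ C → K ≤ C) :
    ∀ k ∈ K, ∀ h ∈ H, k * h * k⁻¹ ∈ H := by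
  have : MulLeftMono G := ⟨fun f _ _ => hleft f _ _⟩
  have : IsConradian_s3 G := ⟨fun f g hf hg => (hC f g hf hg).imp fun _ => And.right⟩
  intro k hk h hh
  by_contra hkh
  obtain ⟨c, hc1, hcH, hkc⟩ : ∃ c, 1 < c ∧ c ∉ H ∧ k⁻¹ * c * k ∈ H := by
    rcases lt_or_gt_of_ne (ne_of_mem_of_not_mem H.one_mem hkh).symm with hlt | hgt
    · exact ⟨_, Left.one_lt_inv_iff.2 hlt, H.inv_mem_iff.not.2 hkh,
        by simpa [mul_assoc] using H.inv_mem hh⟩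
    · exact ⟨_, hgt, hkh, by simpa [mul_assoc] using hh⟩
  have hKc : K ≤ zpowersConvexHull c hc1 :=
    hKmin _ (isConvexSubgroup_zpowersConvexHull hc1) <| by_contra fun hg =>
      hcH (hHmax _ (isConvexSubgroup_zpowersConvexHull hc1) hg (self_mem_zpowersConvexHull hc1))
  obtain ⟨⟨m, hlo⟩, ⟨n, hhi⟩⟩ := hKc hk
  rcases lt_trichotomy k 1 with hk1 | rfl | hk1
  · exact (hHconv.pow_mul_lt_one_of_conj_mem hcH hk1 hkc m).not_gt
      (inv_lt_iff_one_lt_mul'.1 hlo)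
  · exact hcH (by simpa using hkc)
  · exact (hHconv.pow_lt_of_conj_mem hcH hk1 hkc n).not_gt hhi

/-- For a Conradian left-invariant order, if (H, K) is the convex jump
associated to an element g (H maximal convex subgroup not containing g, K minimal
convex subgroup containing g), then H is normal in K. -/
theorem convex_jump_normal {G : Type*} [Group G] [LinearOrder G]
    (hleft : ∀ f a b : G, a ≤ b → f * a ≤ f * b)
    (hC : ∀ f g : G, 1 < f → 1 < g → ∃ n : ℕ, 0 < n ∧ g < f * g ^ n)
    (g : G) (H K : Subgroup G)
    (hHconv : IsConvexSubgroup H) (hKconv : IsConvexSubgroup K)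
    (hgH : g ∉ H) (hgK : g ∈ K)
    (hHmax : ∀ C : Subgroup G, IsConvexSubgroup C → g ∉ C → C ≤ H)
    (hKmin : ∀ C : Subgroup G, IsConvexSubgroup C → g ∈ C → K ≤ C) :
    ∀ k ∈ K, ∀ h ∈ H, k * h * k⁻¹ ∈ H :=
  convex_jump_normal_general hleft hC g H K hHconv hHmax hKmin
end

section
/- Let ≼ be a left-invariant total order on a group G with a finite chain of convex subgroups, and let H ◁ K be a convex jump in this chain with H normal in K. Define a new relation ≼' by declaring f ≻' 1 if and only if: (f ≻ 1 and f ∉ K), or (f ≻ 1 and f ∈ H), or (f ≺ 1 and f ∈ K \ H). Then ≼' is a left-invariant total order on G. -/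
section PositiveCone

variable {G : Type*} [Group G] {P : G → Prop}

def coneLE (P : G → Prop) (f g : G) : Prop :=
  f = g ∨ P (f⁻¹ * g)

theorem coneLE_refl (a : G) : coneLE P a a :=
  Or.inl rfl

theorem coneLE_trans (hmul : ∀ x y, P x → P y → P (x * y)) (a b c : G) :
    coneLE P a b → coneLE P b c → coneLE P a c := by
  rintro (rfl | hab) (rfl | hbc)
  · exact Or.inl rfl
  · exact Or.inr hbc
  · exact Or.inr hab
  · simpa only [coneLE, mul_assoc, mul_inv_cancel_left] using Or.inr (hmul _ _ hab hbc)

theorem coneLE_antisymm (hasymm : ∀ x, P x → ¬P x⁻¹) (a b : G) :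
    coneLE P a b → coneLE P b a → a = b := by
  rintro (rfl | hab) (hba | hba)
  · rfl
  · rfl
  · exact hba.symm
  · exact absurd (by simpa only [mul_inv_rev, inv_inv] using hba) (hasymm _ hab)

theorem coneLE_total (htot : ∀ x, x ≠ 1 → P x ∨ P x⁻¹) (a b : G) :
    coneLE P a b ∨ coneLE P b a := by
  by_cases hab : a = b
  · exact Or.inl (Or.inl hab)
  · rcases htot (a⁻¹ * b) (fun h => hab (inv_mul_eq_one.mp h)) with h | h
    · exact Or.inl (Or.inr h)
    · exact Or.inr (Or.inr (by simpa only [mul_inv_rev, inv_inv] using h))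

theorem coneLE_mul_left (f a b : G) : coneLE P a b → coneLE P (f * a) (f * b) := by
  rintro (rfl | hab)
  · exact Or.inl rfl
  · exact Or.inr (by simpa only [mul_inv_rev, mul_assoc, inv_mul_cancel_left] using hab)

end PositiveCone

namespace IsConvexSubgroup

variable {G : Type*} [Group G] [LinearOrder G] {L : Subgroup G} {x y : G}

theorem lt_of_one_lt_of_notMem (hL : IsConvexSubgroup L) (hx : x ∉ L) (hx1 : 1 < x)
    (hy : y ∈ L) : y < x := by
  by_contra! hxy
  exact hx (hxy.lt_or_eq.elim (hL 1 y x L.one_mem hy hx1) (· ▸ hy))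

theorem lt_of_lt_one_of_notMem (hL : IsConvexSubgroup L) (hx : x ∉ L) (hx1 : x < 1)
    (hy : y ∈ L) : x < y := by
  by_contra! hxy
  exact hx (hxy.lt_or_eq.elim (hL y 1 x hy L.one_mem · hx1) (· ▸ hy))

variable [MulLeftMono G]

theorem one_lt_mul_of_mem_left (hL : IsConvexSubgroup L) (hx : x ∈ L) (hy : y ∉ L)
    (hy1 : 1 < y) : 1 < x * y :=
  inv_lt_iff_one_lt_mul'.mp (hL.lt_of_one_lt_of_notMem hy hy1 (L.inv_mem hx))

theorem one_lt_mul_of_mem_right (hL : IsConvexSubgroup L) (hx : x ∉ L) (hx1 : 1 < x)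
    (hy : y ∈ L) : 1 < x * y :=
  inv_lt_iff_one_lt_mul'.mp <| hL.lt_of_lt_one_of_notMem (fun h => hx (inv_inv x ▸ L.inv_mem h))
    (Left.inv_lt_one_iff.mpr hx1) hy

theorem mul_lt_one_of_mem_left (hL : IsConvexSubgroup L) (hx : x ∈ L) (hy : y ∉ L)
    (hy1 : y < 1) : x * y < 1 :=
  lt_inv_iff_mul_lt_one'.mp (hL.lt_of_lt_one_of_notMem hy hy1 (L.inv_mem hx))

theorem mul_lt_one_of_mem_right (hL : IsConvexSubgroup L) (hx : x ∉ L) (hx1 : x < 1)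
    (hy : y ∈ L) : x * y < 1 :=
  lt_inv_iff_mul_lt_one'.mp <| hL.lt_of_one_lt_of_notMem (fun h => hx (inv_inv x ▸ L.inv_mem h))
    (Left.one_lt_inv_iff.mpr hx1) hy

theorem mul_notMem_of_one_lt (hL : IsConvexSubgroup L) (hx : x ∉ L) (hx1 : 1 < x)
    (hy1 : 1 < y) : x * y ∉ L :=
  fun h => hx (hL 1 (x * y) x L.one_mem h hx1 (lt_mul_of_one_lt_right' x hy1))

theorem mul_notMem_of_lt_one (hL : IsConvexSubgroup L) (hx : x ∉ L) (hx1 : x < 1)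
    (hy1 : y < 1) : x * y ∉ L :=
  fun h => hx (hL (x * y) 1 x h L.one_mem (mul_lt_of_lt_one_right' x hy1) hx1)

end IsConvexSubgroup

section FlippedCone

variable {G : Type*} [Group G] [LinearOrder G] {H K : Subgroup G}

def flipPos (H K : Subgroup G) (f : G) : Prop :=
  (1 < f ∧ f ∉ K) ∨ (1 < f ∧ f ∈ H) ∨ (f < 1 ∧ f ∈ K ∧ f ∉ H)

theorem flipPos_mul [MulLeftMono G] (hHc : IsConvexSubgroup H) (hKc : IsConvexSubgroup K)
    (hHK : H ≤ K) (x y : G) : flipPos H K x → flipPos H K y → flipPos H K (x * y) := by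
  rintro (⟨hx1, hxK⟩ | ⟨hx1, hxH⟩ | ⟨hx1, hxK, hxH⟩) (⟨hy1, hyK⟩ | ⟨hy1, hyH⟩ | ⟨hy1, hyK, hyH⟩)
  · exact Or.inl ⟨Left.one_lt_mul hx1 hy1, hKc.mul_notMem_of_one_lt hxK hx1 hy1⟩
  · exact Or.inl ⟨hKc.one_lt_mul_of_mem_right hxK hx1 (hHK hyH),
      mt (K.mul_mem_cancel_right (hHK hyH)).mp hxK⟩
  · exact Or.inl ⟨hKc.one_lt_mul_of_mem_right hxK hx1 hyK, mt (K.mul_mem_cancel_right hyK).mp hxK⟩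
  · exact Or.inl ⟨hKc.one_lt_mul_of_mem_left (hHK hxH) hyK hy1,
      mt (K.mul_mem_cancel_left (hHK hxH)).mp hyK⟩
  · exact Or.inr (Or.inl ⟨Left.one_lt_mul hx1 hy1, H.mul_mem hxH hyH⟩)
  · exact Or.inr (Or.inr ⟨hHc.mul_lt_one_of_mem_left hxH hyH hy1, K.mul_mem (hHK hxH) hyK,
      mt (H.mul_mem_cancel_left hxH).mp hyH⟩)
  · exact Or.inl ⟨hKc.one_lt_mul_of_mem_left hxK hyK hy1, mt (K.mul_mem_cancel_left hxK).mp hyK⟩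
  · exact Or.inr (Or.inr ⟨hHc.mul_lt_one_of_mem_right hxH hx1 hyH, K.mul_mem hxK (hHK hyH),
      mt (H.mul_mem_cancel_right hyH).mp hxH⟩)
  · exact Or.inr (Or.inr ⟨Left.mul_lt_one hx1 hy1, K.mul_mem hxK hyK,
      hHc.mul_notMem_of_lt_one hxH hx1 hy1⟩)

theorem flipPos_inv_iff [MulLeftMono G] (x : G) :
    flipPos H K x⁻¹ ↔ (x < 1 ∧ x ∉ K) ∨ (x < 1 ∧ x ∈ H) ∨ (1 < x ∧ x ∈ K ∧ x ∉ H) := by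
  simp only [flipPos, Left.one_lt_inv_iff, Left.inv_lt_one_iff, inv_mem_iff]

theorem not_flipPos_inv [MulLeftMono G] (x : G) (hx : flipPos H K x) : ¬flipPos H K x⁻¹ := by
  rw [flipPos_inv_iff]
  unfold flipPos at hx
  have := lt_asymm (a := x) (b := 1)
  tauto

theorem flipPos_or_flipPos_inv [MulLeftMono G] (x : G) (hx : x ≠ 1) :
    flipPos H K x ∨ flipPos H K x⁻¹ := by
  rw [flipPos_inv_iff]
  unfold flipPos
  have := hx.lt_or_gt
  tauto

end FlippedCone

theorem flipped_order_is_left_order_general {G : Type*} [Group G] [LinearOrder G]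
    (hleft : ∀ f a b : G, a ≤ b → f * a ≤ f * b)
    (n : ℕ) (C : Fin (n + 1) → Subgroup G)
    (hconv : ∀ i, IsConvexSubgroup (C i)) (hmono : Monotone C)
    (i : Fin n) (H K : Subgroup G) (hH : H = C i.castSucc) (hK : K = C i.succ) :
    let Pos : G → Prop := fun f =>
      (1 < f ∧ f ∉ K) ∨ (1 < f ∧ f ∈ H) ∨ (f < 1 ∧ f ∈ K ∧ f ∉ H)
    let le' : G → G → Prop := fun f g => f = g ∨ Pos (f⁻¹ * g)
    (∀ a : G, le' a a) ∧ (∀ a b c : G, le' a b → le' b c → le' a c) ∧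
    (∀ a b : G, le' a b → le' b a → a = b) ∧ (∀ a b : G, le' a b ∨ le' b a) ∧
    (∀ f a b : G, le' a b → le' (f * a) (f * b)) := by
  intro Pos le'
  have : MulLeftMono G := ⟨fun f _ _ => hleft f _ _⟩
  have hHK : H ≤ K := hH ▸ hK ▸ hmono Fin.castSucc_lt_succ.le
  exact ⟨coneLE_refl, coneLE_trans (flipPos_mul (hH ▸ hconv _) (hK ▸ hconv _) hHK),
    coneLE_antisymm not_flipPos_inv, coneLE_total flipPos_or_flipPos_inv, coneLE_mul_left⟩

/-- Flipping a left-invariant total order on a convex jump H ◁ K of a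
finite chain of convex subgroups (with H normal in K) again yields a left-invariant
total order. -/
theorem flipped_order_is_left_order {G : Type*} [Group G] [LinearOrder G]
    (hleft : ∀ f a b : G, a ≤ b → f * a ≤ f * b)
    (n : ℕ) (C : Fin (n + 1) → Subgroup G)
    (hconv : ∀ i, IsConvexSubgroup (C i)) (hmono : Monotone C)
    (h0 : C 0 = ⊥) (hlast : C (Fin.last n) = ⊤)
    (i : Fin n) (H K : Subgroup G) (hH : H = C i.castSucc) (hK : K = C i.succ)
    (hjump : ∀ L : Subgroup G, IsConvexSubgroup L → H ≤ L → L ≤ K → L = H ∨ L = K)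
    (hnorm : ∀ k ∈ K, ∀ h ∈ H, k * h * k⁻¹ ∈ H) :
    let Pos : G → Prop := fun f =>
      (1 < f ∧ f ∉ K) ∨ (1 < f ∧ f ∈ H) ∨ (f < 1 ∧ f ∈ K ∧ f ∉ H)
    let le' : G → G → Prop := fun f g => f = g ∨ Pos (f⁻¹ * g)
    (∀ a : G, le' a a) ∧ (∀ a b c : G, le' a b → le' b c → le' a c) ∧
    (∀ a b : G, le' a b → le' b a → a = b) ∧ (∀ a b : G, le' a b ∨ le' b a) ∧
    (∀ f a b : G, le' a b → le' (f * a) (f * b)) :=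
  flipped_order_is_left_order_general hleft n C hconv hmono i H K hH hK
end

section
/- Let G act faithfully by order-preserving bijections on a totally ordered set Ω, and let ≤* be a well-order on Ω. Define ≼ on G by: f ≻ 1 iff f(w_f) > w_f, where w_f is the ≤*-minimal element moved by f. Then ≼ is a left-invariant total order on G. -/
/-!
The relation `a ≤ b ↔ a = b ∨ a⁻¹ * b ≻ 1` is a left-invariant total order as soon as the
positive elements form a cone: they are closed under products, no element is positive together
with its inverse, and every `f ≠ 1` is positive or has a positive inverse. For the induced
positivity, `f * g` is positive at the `≤*`-smaller of the witnesses of `f` and `g`; a witness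
`w` of `f` is the `≤*`-least point moved by `f⁻¹` as well, which `f⁻¹` moves down; and by
faithfulness every `f ≠ 1` moves some point, so it has a `≤*`-least moved point by
well-foundedness.
-/

/-- `f` is positive for the order induced from the well-order `r` on Ω: the ≤*-minimal
point `w` moved by `f` is moved upward. -/
def InducedPos {G Ω : Type*} [Group G] [LinearOrder Ω] (ρ : G →* (Ω ≃o Ω))
    (r : Ω → Ω → Prop) (f : G) : Prop :=
  ∃ w : Ω, ρ f w ≠ w ∧ (∀ w' : Ω, r w' w → ρ f w' = w') ∧ w < ρ f w

theorem leftOrder_of_positiveCone {G : Type*} [Group G] (P : G → Prop)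
    (mul : ∀ {a b : G}, P a → P b → P (a * b)) (not_inv : ∀ {a : G}, P a → ¬ P a⁻¹)
    (total : ∀ {a : G}, a ≠ 1 → P a ∨ P a⁻¹) :
    let le' : G → G → Prop := fun f g => f = g ∨ P (f⁻¹ * g)
    (∀ a : G, le' a a) ∧ (∀ a b c : G, le' a b → le' b c → le' a c) ∧
    (∀ a b : G, le' a b → le' b a → a = b) ∧ (∀ a b : G, le' a b ∨ le' b a) ∧
    (∀ f a b : G, le' a b → le' (f * a) (f * b)) := by
  intro le'
  refine ⟨fun a => Or.inl rfl, ?trans, ?antisymm, ?total, ?mul_left⟩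
  case trans =>
    rintro a b c (rfl | hab) (rfl | hbc)
    · exact Or.inl rfl
    · exact Or.inr hbc
    · exact Or.inr hab
    · right
      simpa only [mul_assoc, mul_inv_cancel_left] using mul hab hbc
  case antisymm =>
    rintro a b (rfl | hab) (h | hba)
    · rfl
    · rfl
    · exact h.symm
    · exact absurd (by simpa only [mul_inv_rev, inv_inv] using hba) (not_inv hab)
  case total =>
    intro a b
    by_cases hab : a = b
    · exact Or.inl (Or.inl hab)
    · rcases total (mt inv_mul_eq_one.mp hab) with h | h
      · exact Or.inl (Or.inr h)
      · exact Or.inr (Or.inr (by simpa only [mul_inv_rev, inv_inv] using h))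
  case mul_left =>
    rintro f a b (rfl | hab)
    · exact Or.inl rfl
    · right
      simpa only [mul_inv_rev, mul_assoc, inv_mul_cancel_left] using hab

section InducedPos

variable {G Ω : Type*} [Group G] [LinearOrder Ω] {ρ : G →* (Ω ≃o Ω)} {r : Ω → Ω → Prop}
  {f g : G} {v w : Ω}

def FixesBelow (ρ : G →* (Ω ≃o Ω)) (r : Ω → Ω → Prop) (f : G) (w : Ω) : Prop :=
  ∀ w' : Ω, r w' w → ρ f w' = w'

theorem FixesBelow.mono [IsTrans Ω r] (hf : FixesBelow ρ r f w) (hvw : r v w) :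
    FixesBelow ρ r f v :=
  fun w' hw' => hf w' (_root_.trans hw' hvw)

theorem FixesBelow.mul (hf : FixesBelow ρ r f w) (hg : FixesBelow ρ r g w) :
    FixesBelow ρ r (f * g) w := fun w' hw' => by
  rw [map_mul, RelIso.mul_apply, hg w' hw', hf w' hw']

theorem FixesBelow.inv (hf : FixesBelow ρ r f w) : FixesBelow ρ r f⁻¹ w := fun w' hw' => by
  conv_lhs => rw [← hf w' hw']
  rw [map_inv, RelIso.inv_apply_self]

theorem inducedPos_iff : InducedPos ρ r f ↔ ∃ w, FixesBelow ρ r f w ∧ w < ρ f w :=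
  ⟨fun ⟨w, _, hfix, hlt⟩ => ⟨w, hfix, hlt⟩, fun ⟨w, hfix, hlt⟩ => ⟨w, hlt.ne', hfix, hlt⟩⟩

theorem InducedPos.le_apply [Std.Trichotomous r] (hf : InducedPos ρ r f)
    (hw : FixesBelow ρ r f w) : w ≤ ρ f w := by
  obtain ⟨u, hmoved, hfix, hlt⟩ := hf
  rcases trichotomous_of r u w with h | rfl | h
  · exact absurd (hw u h) hmoved
  · exact hlt.le
  · exact (hfix w h).ge

theorem InducedPos.mul [IsStrictTotalOrder Ω r] (hf : InducedPos ρ r f)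
    (hg : InducedPos ρ r g) : InducedPos ρ r (f * g) := by
  obtain ⟨u, hfu, hu⟩ := inducedPos_iff.mp hf
  obtain ⟨v, hgv, hv⟩ := inducedPos_iff.mp hg
  simp only [inducedPos_iff, map_mul, RelIso.mul_apply]
  rcases trichotomous_of r u v with h | rfl | h
  · exact ⟨u, hfu.mul (hgv.mono h), by rwa [hgv u h]⟩
  · exact ⟨u, hfu.mul hgv, hu.trans_le ((ρ f).monotone hv.le)⟩
  · refine ⟨v, (hfu.mono h).mul hgv, ?_⟩
    calc v = ρ f v := (hfu v h).symm
      _ < ρ f (ρ g v) := (ρ f).strictMono hv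

theorem InducedPos.not_inv [Std.Trichotomous r] (hf : InducedPos ρ r f) :
    ¬ InducedPos ρ r f⁻¹ := fun hf' => by
  obtain ⟨u, hfu, hu⟩ := inducedPos_iff.mp hf
  have hle : ρ f u ≤ u := by
    simpa only [map_inv, RelIso.apply_inv_self] using (ρ f).monotone (hf'.le_apply hfu.inv)
  exact hu.not_ge hle

theorem inducedPos_or_inducedPos_inv [IsWellFounded Ω r] (hρ : Function.Injective ρ)
    (hf : f ≠ 1) : InducedPos ρ r f ∨ InducedPos ρ r f⁻¹ := by
  have hmoved : ∃ x, ρ f x ≠ x := by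
    by_contra! h
    exact hf (hρ (by ext x; simp [h x]))
  obtain ⟨w, hw, hmin⟩ := (IsWellFounded.wf (r := r)).has_min {x | ρ f x ≠ x} hmoved
  have hfix : FixesBelow ρ r f w := fun w' hw' => by_contra fun h => hmin w' h hw'
  rcases lt_or_gt_of_ne (Ne.symm hw) with h | h
  · exact Or.inl (inducedPos_iff.mpr ⟨w, hfix, h⟩)
  · refine Or.inr (inducedPos_iff.mpr ⟨w, hfix.inv, ?_⟩)
    simpa only [map_inv, RelIso.inv_apply_self] using (ρ f)⁻¹.strictMono h

end InducedPos

/-- Given a faithful order-preserving action of G on a totally ordered set Ω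
and a well-order ≤* on Ω, the relation f ≺ g iff the ≤*-minimal point moved by f⁻¹g is
moved upward defines a left-invariant total order on G. -/
theorem induced_order_is_left_order {G Ω : Type*} [Group G] [LinearOrder Ω]
    (ρ : G →* (Ω ≃o Ω)) (hfaith : Function.Injective ρ)
    (r : Ω → Ω → Prop) (hwo : IsWellOrder Ω r) :
    let le' : G → G → Prop := fun f g => f = g ∨ InducedPos ρ r (f⁻¹ * g)
    (∀ a : G, le' a a) ∧ (∀ a b c : G, le' a b → le' b c → le' a c) ∧
    (∀ a b : G, le' a b → le' b a → a = b) ∧ (∀ a b : G, le' a b ∨ le' b a) ∧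
    (∀ f a b : G, le' a b → le' (f * a) (f * b)) :=
  leftOrder_of_positiveCone (InducedPos ρ r) InducedPos.mul InducedPos.not_inv
    (inducedPos_or_inducedPos_inv hfaith)
end

section
/- Let G act faithfully by order-preserving bijections on a totally ordered set Ω equipped with a well-order ≤*, and suppose the action has no crossing. Then the induced left-invariant order on G (where f ≻ 1 iff f(w_f) > w_f, with w_f the ≤*-minimal element moved by f) is Conradian. -/
/-- The paper's crossing `(f, g, u, v, w)`, for order automorphisms of `Ω`. -/
def IsCrossing {Ω : Type*} [LinearOrder Ω] (f g : Ω ≃o Ω) (u v w : Ω) : Prop :=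
  (u < w ∧ w < v) ∧ (∀ n : ℕ, (g ^ n) u < v ∧ u < (f ^ n) v) ∧
    ∃ M N : ℕ, (f ^ N) v < w ∧ w < (g ^ M) u

namespace OrderIso

variable {Ω : Type*} [LinearOrder Ω]

theorem pow_succ_apply (e : Ω ≃o Ω) (n : ℕ) (x : Ω) : (e ^ (n + 1)) x = e ((e ^ n) x) := by
  rw [pow_succ', RelIso.mul_apply]

theorem pow_apply_eq_self_of_apply_eq_self {e : Ω ≃o Ω} {x : Ω} (hx : e x = x) (n : ℕ) :
    (e ^ n) x = x := by
  induction n with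
  | zero => rfl
  | succ n ih => rw [pow_succ_apply, ih, hx]

theorem inv_apply_eq_self_of_apply_eq_self {e : Ω ≃o Ω} {x : Ω} (hx : e x = x) : e⁻¹ x = x := by
  conv_lhs => rw [← hx]
  exact RelIso.inv_apply_self e x

theorem le_pow_apply_of_le_apply {e : Ω ≃o Ω} {x : Ω} (hx : x ≤ e x) (n : ℕ) : x ≤ (e ^ n) x := by
  induction n with
  | zero => rfl
  | succ n ih => rw [pow_succ_apply]; exact hx.trans (e.monotone ih)

theorem pow_apply_lt_of_mapsTo_Iio {e : Ω ≃o Ω} {x v : Ω} (he : ∀ y < v, e y < v) (hx : x < v)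
    (n : ℕ) : (e ^ n) x < v := by
  induction n with
  | zero => exact hx
  | succ n ih => rw [pow_succ_apply]; exact he _ ih

theorem exists_pow_apply_lt {e : Ω ≃o Ω} {x y : Ω} (hxy : x < y) (hx : e x ≤ x) (hy : e y ≤ x) :
    ∃ N : ℕ, (e ^ N) y < x := by
  rcases hy.lt_or_eq with hy | hy
  · exact ⟨1, by rwa [pow_one]⟩
  · have hex : e x ≠ x := fun h => hxy.ne (e.injective (h.trans hy.symm))
    exact ⟨2, by rw [pow_succ_apply, pow_one, hy]; exact hx.lt_of_ne hex⟩

theorem exists_isCrossing {f g : Ω ≃o Ω} {u : Ω} (hfu : u ≤ f u) (hgu : u < g u)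
    (h₁ : f (g u) ≤ g u) (h₂ : f (g (g u)) ≤ g u) :
    ∃ N : ℕ, IsCrossing f (g * f ^ N) u (g (g u)) (g u) := by
  have hg₁₂ : g u < g (g u) := g.strictMono hgu
  obtain ⟨N, hN⟩ := exists_pow_apply_lt hg₁₂ h₁ h₂
  set b := g * f ^ N
  have hb : ∀ y < g (g u), b y < g (g u) := fun y hy =>
    g.strictMono (((f ^ N).strictMono hy).trans hN)
  have hbu : g u ≤ b u := g.monotone (le_pow_apply_of_le_apply hfu N)
  refine ⟨N, ⟨hgu, hg₁₂⟩, fun n => ⟨pow_apply_lt_of_mapsTo_Iio hb (hgu.trans hg₁₂) n, ?_⟩,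
    2, N, hN, ?_⟩
  · exact (le_pow_apply_of_le_apply hfu n).trans_lt ((f ^ n).strictMono (hgu.trans hg₁₂))
  · rw [pow_two, RelIso.mul_apply]
    exact hbu.trans_lt (b.strictMono (hgu.trans_le hbu))

end OrderIso

theorem inducedPos_inv_mul_mul_pow {G Ω : Type*} [Group G] [LinearOrder Ω]
    (ρ : G →* (Ω ≃o Ω)) (r : Ω → Ω → Prop) {f g : G} {w : Ω} (n : ℕ)
    (hf : ∀ w', r w' w → ρ f w' = w') (hg : ∀ w', r w' w → ρ g w' = w')
    (hlt : ρ g w < ρ f ((ρ g ^ n) w)) : InducedPos ρ r (g⁻¹ * (f * g ^ n)) := by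
  have hval : ∀ x, ρ (g⁻¹ * (f * g ^ n)) x = (ρ g)⁻¹ (ρ f ((ρ g ^ n) x)) := fun x => by
    simp only [map_mul, map_inv, map_pow, RelIso.mul_apply]
  have hup : w < ρ (g⁻¹ * (f * g ^ n)) w := by
    rw [hval]
    simpa only [RelIso.inv_apply_self] using (ρ g)⁻¹.strictMono hlt
  refine ⟨w, hup.ne', fun w' hw' => ?_, hup⟩
  rw [hval, OrderIso.pow_apply_eq_self_of_apply_eq_self (hg w' hw'), hf w' hw',
    OrderIso.inv_apply_eq_self_of_apply_eq_self (hg w' hw')]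

theorem induced_order_conradian_of_no_crossing_general {G Ω : Type*} [Group G] [LinearOrder Ω]
    (ρ : G →* (Ω ≃o Ω))
    (r : Ω → Ω → Prop) (hwo : IsWellOrder Ω r)
    (hnocross : ¬ ∃ (f g : G) (u v w : Ω), (u < w ∧ w < v) ∧
        (∀ n : ℕ, ρ (g ^ n) u < v ∧ u < ρ (f ^ n) v) ∧
        (∃ M N : ℕ, ρ (f ^ N) v < w ∧ w < ρ (g ^ M) u)) :
    ∀ f g : G, InducedPos ρ r f → InducedPos ρ r g →
      ∃ n : ℕ, 0 < n ∧ InducedPos ρ r (g⁻¹ * (f * g ^ n)) := by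
  rintro f g ⟨wf, -, hf_fix, hf_up⟩ ⟨wg, -, hg_fix, hg_up⟩
  rcases trichotomous_of r wf wg with hlt | hge
  · refine ⟨1, one_pos, inducedPos_inv_mul_mul_pow ρ r 1 hf_fix
      (fun w' hw' => hg_fix w' (_root_.trans hw' hlt)) ?_⟩
    rwa [pow_one, hg_fix wf hlt]
  -- from now on `wg` is the least point moved by `f` or `g`
  have hf_fix' : ∀ w', r w' wg → ρ f w' = w' := fun w' hw' =>
    hf_fix w' (hge.elim (· ▸ hw') fun hgt => _root_.trans hw' hgt)
  have hf_le : wg ≤ ρ f wg := hge.elim (fun h => (h ▸ hf_up).le) fun hgt => (hf_fix wg hgt).ge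
  have hpos : ∀ n, ρ g wg < ρ f ((ρ g ^ n) wg) → InducedPos ρ r (g⁻¹ * (f * g ^ n)) :=
    fun n => inducedPos_inv_mul_mul_pow ρ r n hf_fix' hg_fix
  by_contra! hneg
  have h₁ : ρ f (ρ g wg) ≤ ρ g wg := not_lt.1 fun h => hneg 1 one_pos (hpos 1 (by rwa [pow_one]))
  have h₂ : ρ f (ρ g (ρ g wg)) ≤ ρ g wg := not_lt.1 fun h =>
    hneg 2 two_pos (hpos 2 (by rwa [pow_two, RelIso.mul_apply]))
  obtain ⟨N, hcross⟩ := OrderIso.exists_isCrossing hf_le hg_up h₁ h₂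
  exact hnocross ⟨f, g * f ^ N, _, _, _, by simpa only [IsCrossing, map_mul, map_pow] using hcross⟩

/-- If a faithful order-preserving action of G on a totally ordered set Ω
has no crossing, then the left-order induced from any well-order ≤* on Ω is Conradian. -/
theorem induced_order_conradian_of_no_crossing {G Ω : Type*} [Group G] [LinearOrder Ω]
    (ρ : G →* (Ω ≃o Ω)) (hfaith : Function.Injective ρ)
    (r : Ω → Ω → Prop) (hwo : IsWellOrder Ω r)
    (hnocross : ¬ ∃ (f g : G) (u v w : Ω), (u < w ∧ w < v) ∧
        (∀ n : ℕ, ρ (g ^ n) u < v ∧ u < ρ (f ^ n) v) ∧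
        (∃ M N : ℕ, ρ (f ^ N) v < w ∧ w < ρ (g ^ M) u)) :
    ∀ f g : G, InducedPos ρ r f → InducedPos ρ r g →
      ∃ n : ℕ, 0 < n ∧ InducedPos ρ r (g⁻¹ * (f * g ^ n)) :=
  induced_order_conradian_of_no_crossing_general ρ r hwo hnocross
end

section
/- Let G act faithfully by order-preserving bijections on a totally ordered set Ω with a well-order ≤*, and let ≼ be the induced left-order (f ≻ 1 iff f(w_f) > w_f). If Ω₀ is an initial segment of (Ω, ≤*), then the pointwise stabilizer of Ω₀ in G is a convex subgroup for ≼. -/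
/-!
On `Ω₀`, `f₁⁻¹ * h` differs from `h` by a map fixing `Ω₀` pointwise and `h⁻¹ * f₂` agrees with
`h⁻¹`, so at every point of `Ω₀` they move in the same direction as `h`, resp. `h⁻¹`. If `h` moved
some point of `Ω₀`, the ≤*-least point moved by each of them would lie in the initial segment `Ω₀`,
so `f₁ ≺ h ≺ f₂` would make both `h` and `h⁻¹` positive, which is impossible.
-/

section

variable {G Ω : Type*} [Group G] [LinearOrder Ω] (ρ : G →* (Ω ≃o Ω))

lemma apply_inv_eq_self_iff {g : G} {x : Ω} : ρ g⁻¹ x = x ↔ ρ g x = x := by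
  rw [map_inv, ← (ρ g).apply_eq_iff_eq, RelIso.apply_inv_self, eq_comm]

lemma apply_apply_inv {g : G} (x : Ω) : ρ g (ρ g⁻¹ x) = x := by
  rw [map_inv, RelIso.apply_inv_self]

lemma compare_apply_mul_of_apply_eq {a g : G} {x : Ω} (ha : ρ a x = x) :
    compare (ρ (a * g) x) x = compare (ρ g x) x := by
  rw [map_mul, RelIso.mul_apply]
  nth_rw 2 [← ha]
  exact (compare_iff _ _).2 ((ρ a).strictMono.compares.2 ((compare_iff _ _).1 rfl))

variable {r : Ω → Ω → Prop} [Std.Trichotomous r]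

lemma InducedPos.of_compare_eq_on {Ω₀ : Set Ω} (hinit : ∀ x y : Ω, r x y → y ∈ Ω₀ → x ∈ Ω₀)
    {g k : G} (hcmp : ∀ x ∈ Ω₀, compare (ρ g x) x = compare (ρ k x) x)
    {u : Ω} (hu : u ∈ Ω₀) (hku : ρ k u ≠ u) (hg : InducedPos ρ r g) : InducedPos ρ r k := by
  obtain ⟨v, hv_moved, hv_least, hv_up⟩ := hg
  have fixed_iff : ∀ x ∈ Ω₀, ρ g x = x ↔ ρ k x = x := fun x hx => by
    rw [← compare_eq_iff_eq, hcmp x hx, compare_eq_iff_eq]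
  have hv : v ∈ Ω₀ := by
    rcases trichotomous_of r u v with huv | rfl | hvu
    · exact absurd ((fixed_iff u hu).1 (hv_least u huv)) hku
    · exact hu
    · exact hinit v u hvu hu
  refine ⟨v, fun h => hv_moved ((fixed_iff v hv).2 h), fun w hwv => ?_, ?_⟩
  · exact (fixed_iff w (hinit w v hwv hv)).1 (hv_least w hwv)
  · rw [← compare_gt_iff_gt, ← hcmp v hv, compare_gt_iff_gt]
    exact hv_up

lemma InducedPos.not_inv_s8 {g : G} (hg : InducedPos ρ r g) : ¬ InducedPos ρ r g⁻¹ := by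
  rintro ⟨v', hv'_moved, hv'_least, hv'_up⟩
  obtain ⟨v, hv_moved, hv_least, hv_up⟩ := hg
  rcases trichotomous_of r v v' with hvv' | rfl | hv'v
  · exact hv_moved ((apply_inv_eq_self_iff ρ).1 (hv'_least v hvv'))
  · have hdown := (ρ g).strictMono hv'_up
    rw [apply_apply_inv] at hdown
    exact lt_asymm hv_up hdown
  · exact hv'_moved ((apply_inv_eq_self_iff ρ).2 (hv_least v' hv'v))

end

theorem stabilizer_of_initial_segment_convex_general {G Ω : Type*} [Group G] [LinearOrder Ω]
    (ρ : G →* (Ω ≃o Ω))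
    (r : Ω → Ω → Prop) (hwo : IsWellOrder Ω r)
    (Ω₀ : Set Ω) (hinit : ∀ x y : Ω, r x y → y ∈ Ω₀ → x ∈ Ω₀) :
    let Stab : Set G := {g : G | ∀ w ∈ Ω₀, ρ g w = w}
    let lt' : G → G → Prop := fun f g => InducedPos ρ r (f⁻¹ * g)
    (1 : G) ∈ Stab ∧ (∀ a b : G, a ∈ Stab → b ∈ Stab → a * b ∈ Stab) ∧
    (∀ a : G, a ∈ Stab → a⁻¹ ∈ Stab) ∧
    (∀ f₁ f₂ h : G, f₁ ∈ Stab → f₂ ∈ Stab → lt' f₁ h → lt' h f₂ → h ∈ Stab) := by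
  intro Stab lt'
  have inv_mem : ∀ a ∈ Stab, a⁻¹ ∈ Stab := fun a ha w hw => (apply_inv_eq_self_iff ρ).2 (ha w hw)
  refine ⟨fun w _ => by simp, fun a b ha hb w hw => ?_, inv_mem, ?_⟩
  · rw [map_mul, RelIso.mul_apply, hb w hw, ha w hw]
  rintro f₁ f₂ h hf₁ hf₂ hf₁h hhf₂ w hw
  by_contra hmoved
  have hpos : InducedPos ρ r h := hf₁h.of_compare_eq_on ρ hinit
    (fun x hx => compare_apply_mul_of_apply_eq ρ (inv_mem f₁ hf₁ x hx)) hw hmoved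
  have hneg : InducedPos ρ r h⁻¹ := hhf₂.of_compare_eq_on ρ hinit
    (fun x hx => by rw [map_mul, RelIso.mul_apply, hf₂ x hx]) hw
    ((apply_inv_eq_self_iff ρ).not.2 hmoved)
  exact hpos.not_inv_s8 ρ hneg

/-- For the induced left-order coming from a faithful order-preserving
action of G on (Ω, ≤) with auxiliary well-order ≤*, the pointwise stabilizer of any
initial segment Ω₀ of (Ω, ≤*) is a convex subgroup. -/
theorem stabilizer_of_initial_segment_convex {G Ω : Type*} [Group G] [LinearOrder Ω]
    (ρ : G →* (Ω ≃o Ω)) (hfaith : Function.Injective ρ)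
    (r : Ω → Ω → Prop) (hwo : IsWellOrder Ω r)
    (Ω₀ : Set Ω) (hinit : ∀ x y : Ω, r x y → y ∈ Ω₀ → x ∈ Ω₀) :
    let Stab : Set G := {g : G | ∀ w ∈ Ω₀, ρ g w = w}
    let lt' : G → G → Prop := fun f g => InducedPos ρ r (f⁻¹ * g)
    (1 : G) ∈ Stab ∧ (∀ a b : G, a ∈ Stab → b ∈ Stab → a * b ∈ Stab) ∧
    (∀ a : G, a ∈ Stab → a⁻¹ ∈ Stab) ∧
    (∀ f₁ f₂ h : G, f₁ ∈ Stab → f₂ ∈ Stab → lt' f₁ h → lt' h f₂ → h ∈ Stab) :=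
  stabilizer_of_initial_segment_convex_general ρ r hwo Ω₀ hinit
end

section
/- A torsion-free abelian group G admits only finitely many left-invariant total orders if and only if G has rank 1 (i.e., G is nontrivial and embeds in ℚ). -/
/-- A translation-invariant total order on an additive group, given as a relation. -/
def IsInvariantTotalOrder {G : Type*} [AddGroup G] (le : G → G → Prop) : Prop :=
  (∀ a, le a a) ∧ (∀ a b c, le a b → le b c → le a c) ∧
  (∀ a b, le a b → le b a → a = b) ∧ (∀ a b, le a b ∨ le b a) ∧
  (∀ f a b, le a b → le (f + a) (f + b))

/-!
Given an injective `f : G →+ ℚ`, two elements with `f`-positive images have a common positive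
multiple, so an invariant order is fixed by the sign of one element: it is the order induced by `f`
or its reverse. Given ℤ-independent `x, y`, divisibility of `ℚ` extends `m x + n y ↦ q m + n` to
some `ψ_q : G →+ ℚ` for every `q : ℚ`. Comparing first by `ψ_q` and then by a fixed lexicographic
embedding of the divisible hull gives invariant orders that differ for different `q`: if
`q < c / d < q'` then `ψ (d x - c y)` has different signs for `ψ_q` and `ψ_q'`.
-/

open Function

universe u

section AddGroup

variable {G : Type*} [AddGroup G] {le le' : G → G → Prop}

theorem Function.Injective.isInvariantTotalOrder {H : Type*} [AddGroup H] [LinearOrder H]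
    [AddLeftMono H] {f : G →+ H} (hf : Injective f) :
    IsInvariantTotalOrder fun a b => f a ≤ f b :=
  ⟨fun _ => le_rfl, fun _ _ _ => le_trans, fun _ _ hab hba => hf (le_antisymm hab hba),
    fun _ _ => le_total _ _,
    fun c _ _ hab => by simpa only [map_add] using add_le_add_right hab (f c)⟩

namespace IsInvariantTotalOrder

theorem swap (h : IsInvariantTotalOrder le) : IsInvariantTotalOrder (Function.swap le) := by
  obtain ⟨refl, trans, antisymm, total, add_left⟩ := h
  exact ⟨refl, fun a b c hab hbc => trans c b a hbc hab, fun a b hab hba => antisymm a b hba hab,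
    fun a b => total b a, fun f a b => add_left f b a⟩

theorem nonneg_nsmul (h : IsInvariantTotalOrder le) {x : G} (hx : le 0 x) (n : ℕ) :
    le 0 (n • x) := by
  obtain ⟨refl, trans, -, -, add_left⟩ := h
  induction n with
  | zero => simpa using refl 0
  | succ n ih =>
    rw [succ_nsmul']
    exact trans _ _ _ hx (by simpa using add_left x 0 _ ih)

theorem le_iff_nonneg_neg_add (h : IsInvariantTotalOrder le) {a b : G} :
    le a b ↔ le 0 (-a + b) := by
  obtain ⟨-, -, -, -, add_left⟩ := h
  exact ⟨fun hab => by simpa using add_left (-a) a b hab,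
    fun hab => by simpa using add_left a 0 (-a + b) hab⟩

theorem eq_of_imp (h : IsInvariantTotalOrder le) (h' : IsInvariantTotalOrder le')
    (H : ∀ a b, le a b → le' a b) : le = le' := by
  obtain ⟨refl, -, -, total, -⟩ := h
  obtain ⟨-, -, antisymm', -, -⟩ := h'
  ext a b
  refine ⟨H a b, fun hab' => ?_⟩
  rcases total a b with hab | hba
  · exact hab
  · exact antisymm' a b hab' (H b a hba) ▸ refl a

theorem eq_of_nonneg_imp (h : IsInvariantTotalOrder le) (h' : IsInvariantTotalOrder le')
    (H : ∀ x, le 0 x → le' 0 x) : le = le' :=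
  h.eq_of_imp h' fun _ _ hab => h'.le_iff_nonneg_neg_add.2 (H _ (h.le_iff_nonneg_neg_add.1 hab))

end IsInvariantTotalOrder

end AddGroup

theorem exists_nat_mul_eq_nat_mul_of_pos {a b : ℚ} (ha : 0 < a) (hb : 0 < b) :
    ∃ m n : ℕ, n ≠ 0 ∧ (m : ℚ) * a = n * b := by
  set r := b / a
  have hr : 0 ≤ r.num := Rat.num_nonneg.2 (by positivity)
  refine ⟨r.num.toNat, r.den, r.den_ne_zero, ?_⟩
  have hnum : (r.num.toNat : ℚ) = r * r.den := by
    rw [← Int.cast_natCast, Int.toNat_of_nonneg hr, Rat.mul_den_eq_num]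
  rw [hnum, mul_right_comm, div_mul_cancel₀ b ha.ne', mul_comm]

section RankOne

variable {G : Type*} [AddCommGroup G] {le : G → G → Prop} {f : G →+ ℚ}

namespace IsInvariantTotalOrder

theorem nonneg_of_pos (h : IsInvariantTotalOrder le) (hf : Injective f) {x y : G}
    (hx : 0 < f x) (hy : 0 < f y) (hlx : le 0 x) : le 0 y := by
  have := hf.isAddTorsionFree
  obtain ⟨m, n, hn, hmn⟩ := exists_nat_mul_eq_nat_mul_of_pos hx hy
  replace hmn : m • x = n • y := hf (by simpa [map_nsmul] using hmn)
  obtain ⟨-, -, antisymm, total, -⟩ := id h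
  rcases total 0 y with hly | hyl
  · exact hly
  · have hny : n • y = 0 :=
      antisymm _ _ (h.swap.nonneg_nsmul hyl n) (hmn ▸ h.nonneg_nsmul hlx m)
    rw [nsmul_eq_zero_iff_right hn] at hny
    simp [hny] at hy

theorem eq_of_forall_pos (h : IsInvariantTotalOrder le) (hf : Injective f)
    (H : ∀ x, 0 < f x → le 0 x) : le = fun a b => f a ≤ f b := by
  refine (hf.isInvariantTotalOrder.eq_of_nonneg_imp h fun x hx => ?_).symm
  rw [map_zero] at hx
  rcases hx.eq_or_lt with hx | hx
  · rw [(map_eq_zero_iff f hf).1 hx.symm]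
    exact h.1 0
  · exact H x hx

end IsInvariantTotalOrder

theorem setOf_isInvariantTotalOrder_subset (hf : Injective f) :
    {le : G → G → Prop | IsInvariantTotalOrder le} ⊆
      {fun a b => f a ≤ f b, fun a b => f b ≤ f a} := by
  intro le h
  by_cases H : ∀ x, 0 < f x → le 0 x
  · exact .inl (h.eq_of_forall_pos hf H)
  · push Not at H
    obtain ⟨x₀, hx₀, hlx₀⟩ := H
    obtain ⟨-, -, -, total, -⟩ := id h
    have hsx₀ : Function.swap le 0 x₀ := (total 0 x₀).resolve_left hlx₀
    have hswap := h.swap.eq_of_forall_pos hf fun y hy => h.swap.nonneg_of_pos hf hx₀ hy hsx₀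
    exact .inr (funext₂ fun a b => congrFun (congrFun hswap b) a)

end RankOne

section Infinite

variable {G : Type*} [AddCommGroup G]

theorem exists_addMonoidHom_rat_apply_eq_one [IsAddTorsionFree G] {g : G} (hg : g ≠ 0) :
    ∃ φ : G →+ ℚ, φ g = 1 := by
  obtain ⟨φ, hφ⟩ := (Module.Baer.of_divisible ℚ).extension_property_addMonoidHom
    (zmultiplesHom G g) (smul_left_injective ℤ hg) (Int.castAddHom ℚ)
  exact ⟨φ, by simpa using DFunLike.congr_fun hφ 1⟩

theorem exists_injective_addMonoidHom_rat [IsAddTorsionFree G]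
    (hrank : ∀ x y : G, ¬LinearIndependent ℤ ![x, y]) : ∃ f : G →+ ℚ, Injective f := by
  rcases subsingleton_or_nontrivial G with _ | _
  · exact ⟨0, injective_of_subsingleton _⟩
  obtain ⟨g, hg⟩ := exists_ne (0 : G)
  obtain ⟨φ, hφg⟩ := exists_addMonoidHom_rat_apply_eq_one hg
  refine ⟨φ, (injective_iff_map_eq_zero φ).2 fun x hx => ?_⟩
  obtain ⟨s, t, hst, hne⟩ : ∃ s t : ℤ, s • x + t • g = 0 ∧ ¬(s = 0 ∧ t = 0) := by
    simpa [LinearIndependent.pair_iff] using hrank x g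
  obtain rfl : t = 0 := by simpa [hx, hφg] using congrArg φ hst
  have hs : s ≠ 0 := fun hs => hne ⟨hs, rfl⟩
  simpa [hs] using hst

theorem exists_addMonoidHom_rat_of_linearIndependent {x y : G} (hxy : LinearIndependent ℤ ![x, y])
    (q : ℚ) : ∃ ψ : G →+ ℚ, ∀ m n : ℤ, ψ (m • x + n • y) = q * m + n := by
  let e : ℤ × ℤ →+ G := (zmultiplesHom G x).coprod (zmultiplesHom G y)
  have he : Injective e := (injective_iff_map_eq_zero e).2 fun ⟨m, n⟩ h => by
    obtain ⟨rfl, rfl⟩ := LinearIndependent.pair_iff.1 hxy m n h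
    rfl
  obtain ⟨ψ, hψ⟩ := (Module.Baer.of_divisible ℚ).extension_property_addMonoidHom e he
    (((AddMonoidHom.mulLeft q).comp (Int.castAddHom ℚ)).coprod (Int.castAddHom ℚ))
  exact ⟨ψ, fun m n => by simpa [e] using DFunLike.congr_fun hψ (m, n)⟩

theorem exists_injective_addMonoidHom_lex (G : Type u) [AddCommGroup G] [IsAddTorsionFree G] :
    ∃ (ι : Type u) (_ : LinearOrder ι) (j : G →+ Lex (ι →₀ ℚ)), Injective j := by
  let b := Module.Basis.ofVectorSpace ℚ (DivisibleHull G)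
  let o : LinearOrder (Module.Basis.ofVectorSpaceIndex ℚ (DivisibleHull G)) :=
    IsWellOrder.linearOrder WellOrderingRel
  exact ⟨_, o, (toLexAddEquiv _).toAddMonoidHom.comp
      (b.repr.toAddMonoidHom.comp (DivisibleHull.coeAddMonoidHom G)),
    (toLexAddEquiv _).injective.comp (b.repr.injective.comp DivisibleHull.coe_injective)⟩

theorem exists_apply_neg_and_apply_pos {x y : G} {ψ : ℚ → G →+ ℚ}
    (hψ : ∀ q (m n : ℤ), ψ q (m • x + n • y) = q * m + n) {q q' : ℚ} (hqq' : q < q') :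
    ∃ w, ψ q w < 0 ∧ 0 < ψ q' w := by
  obtain ⟨r, hqr, hrq'⟩ := exists_between hqq'
  have hψw : ∀ s, ψ s ((r.den : ℤ) • x + (-r.num) • y) = r.den * (s - r) := fun s => by
    rw [hψ]
    push_cast
    rw [← Rat.mul_den_eq_num]
    ring
  refine ⟨(r.den : ℤ) • x + (-r.num) • y, ?_, ?_⟩ <;> rw [hψw]
  · exact mul_neg_of_pos_of_neg (by positivity) (sub_neg.2 hqr)
  · exact mul_pos (by positivity) (sub_pos.2 hrq')

theorem infinite_setOf_isInvariantTotalOrder [IsAddTorsionFree G] {x y : G}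
    (hxy : LinearIndependent ℤ ![x, y]) :
    {le : G → G → Prop | IsInvariantTotalOrder le}.Infinite := by
  obtain ⟨ι, _, j, hj⟩ := exists_injective_addMonoidHom_lex G
  choose ψ hψ using exists_addMonoidHom_rat_of_linearIndependent hxy
  let F (q : ℚ) : G →+ Lex (ℚ × Lex (ι →₀ ℚ)) :=
    (toLexAddEquiv _).toAddMonoidHom.comp ((ψ q).prod j)
  have hF (q : ℚ) : Injective (F q) := fun a b hab =>
    hj (congrArg Prod.snd ((toLexAddEquiv _).injective hab))
  refine Set.infinite_of_injective_forall_mem (f := fun q a b => F q a ≤ F q b)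
    (.of_lt_imp_ne fun q q' hqq' hFF' => ?_) fun q => (hF q).isInvariantTotalOrder
  obtain ⟨w, hw, hw'⟩ := exists_apply_neg_and_apply_pos hψ hqq'
  have hle : F q w ≤ F q 0 := by
    show toLex (ψ q w, j w) ≤ toLex (ψ q 0, j 0)
    exact Prod.Lex.toLex_le_toLex.2 (.inl (by rwa [map_zero]))
  have hlt : F q' 0 < F q' w := by
    show toLex (ψ q' 0, j 0) < toLex (ψ q' w, j w)
    exact Prod.Lex.toLex_lt_toLex.2 (.inl (by rwa [map_zero]))
  exact (congrFun (congrFun hFF' w) 0 ▸ hle).not_gt hlt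

end Infinite

theorem finitely_many_orders_iff_rank_one_general {G : Type*} [AddCommGroup G]
    (htf : ∀ (g : G) (n : ℕ), 0 < n → n • g = 0 → g = 0) :
    {le : G → G → Prop | IsInvariantTotalOrder le}.Finite ↔
      ∃ f : G →+ ℚ, Function.Injective f := by
  have : IsAddTorsionFree G := ⟨fun n hn a b hab =>
    sub_eq_zero.1 (htf _ n (Nat.pos_of_ne_zero hn) (by rw [nsmul_sub, sub_eq_zero]; exact hab))⟩
  constructor
  · exact fun hfin => exists_injective_addMonoidHom_rat fun x y hxy =>
      infinite_setOf_isInvariantTotalOrder hxy hfin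
  · rintro ⟨f, hf⟩
    exact (Set.toFinite _).subset (setOf_isInvariantTotalOrder_subset hf)

/-- A (nontrivial) torsion-free abelian group admits only finitely many
invariant total orders iff it has rank 1, i.e., it embeds in ℚ. -/
theorem finitely_many_orders_iff_rank_one {G : Type*} [AddCommGroup G] [Nontrivial G]
    (htf : ∀ (g : G) (n : ℕ), 0 < n → n • g = 0 → g = 0) :
    {le : G → G → Prop | IsInvariantTotalOrder le}.Finite ↔
      ∃ f : G →+ ℚ, Function.Injective f :=
  finitely_many_orders_iff_rank_one_general htf
end

section
/- Every faithful representation of B(1,2) into the affine group of the real line sends a to a nontrivial translation x ↦ x + α (α ≠ 0) and b to x ↦ 2x + β for some β ∈ ℝ. -/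
/-- The single relation b·a·b⁻¹·(a²)⁻¹ defining the Baumslag–Solitar group B(1,2),
with `false` playing the role of `a` and `true` that of `b`. -/
def bsRels : Set (FreeGroup Bool) :=
  {FreeGroup.of true * FreeGroup.of false * (FreeGroup.of true)⁻¹ *
    (FreeGroup.of false * FreeGroup.of false)⁻¹}

/-- The Baumslag–Solitar group B(1,2) = ⟨a, b ∣ b·a·b⁻¹ = a²⟩. -/
abbrev BS12 : Type := PresentedGroup bsRels

/-- The generator a of B(1,2). -/
def aBS : BS12 := PresentedGroup.of false

/-- The generator b of B(1,2). -/
def bBS : BS12 := PresentedGroup.of true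

section
variable {G : Type*} [Group G]

/-- A left-invariant total order on G, given as a relation. -/
def IsLeftTotalOrder (le : G → G → Prop) : Prop :=
  (∀ a, le a a) ∧ (∀ a b c, le a b → le b c → le a c) ∧
  (∀ a b, le a b → le b a → a = b) ∧ (∀ a b, le a b ∨ le b a) ∧
  (∀ f a b, le a b → le (f * a) (f * b))

/-- The strict relation associated to `le`. -/
def clt (le : G → G → Prop) (a b : G) : Prop := le a b ∧ ¬ le b a

/-- A Conradian (C-)ordering on G. -/
def IsConradianOrder (le : G → G → Prop) : Prop :=
  IsLeftTotalOrder le ∧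
  ∀ f g : G, clt le 1 f → clt le 1 g → ∃ n : ℕ, 0 < n ∧ clt le g (f * g ^ n)

end

/-! The assignment a ↦ (x ↦ x + 1), b ↦ (x ↦ 2x) respects the relation, so a ≠ 1 in B(1,2)
and, φ being faithful, φ a is not the identity. Write
φ a = (x ↦ p x + α) and φ b = (x ↦ s x + β) with p, s ≠ 0. The relation b a = a² b
compares slopes, s p = p² s, so p = 1; it then compares translation parts,
s α + β = β + 2 α, so s = 2 because α ≠ 0. -/

lemma bBS_mul_aBS_mul_bBS_inv : bBS * aBS * bBS⁻¹ = aBS * aBS := by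
  rw [← mul_inv_eq_one]
  exact PresentedGroup.one_of_mem (rels := bsRels) rfl

noncomputable def BS12.permRep : BS12 →* Equiv.Perm ℝ :=
  PresentedGroup.toGroup
    (f := fun b => if b then Equiv.mulLeft₀ (2 : ℝ) two_ne_zero else Equiv.addRight 1)
    (by rintro _ rfl; ext x; simp; ring)

lemma aBS_ne_one : aBS ≠ 1 := by
  intro h
  simpa [BS12.permRep, aBS] using congrArg (fun g => BS12.permRep g 0) h

lemma AffineEquiv.exists_slope {k : Type*} [Field k] (e : k ≃ᵃ[k] k) :
    ∃ s c : k, s ≠ 0 ∧ ∀ x, e x = s * x + c := by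
  refine ⟨e.linear 1, e 0, e.linear.map_ne_zero_iff.2 one_ne_zero, fun x => ?_⟩
  calc e x = e.linear (x • 1) + e 0 := by
        simpa only [smul_eq_mul, mul_one, vadd_eq_add, add_zero] using e.map_vadd 0 x
    _ = e.linear 1 * x + e 0 := by rw [map_smul, smul_eq_mul, mul_comm]

theorem AffineEquiv.exists_of_mul_mul_inv_eq_mul_self {k : Type*} [Field k] {A B : k ≃ᵃ[k] k}
    (hrel : B * A * B⁻¹ = A * A) (hA : A ≠ 1) :
    ∃ α β : k, α ≠ 0 ∧ (∀ x, A x = x + α) ∧ ∀ x, B x = 2 * x + β := by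
  obtain ⟨p, α, hp0, hA_apply⟩ := A.exists_slope
  obtain ⟨s, β, hs0, hB_apply⟩ := B.exists_slope
  have hcomm : ∀ x, B (A x) = A (A (B x)) := fun x =>
    congrArg (fun e : k ≃ᵃ[k] k => e x) (mul_inv_eq_iff_eq_mul.1 hrel)
  have hpoly : ∀ x, s * (p * x + α) + β = p * (p * (s * x + β) + α) + α := fun x => by
    simpa only [hA_apply, hB_apply] using hcomm x
  obtain rfl : p = 1 := by
    have : p * s * (p - 1) = 0 := by linear_combination hpoly 0 - hpoly 1
    simpa [sub_eq_zero, hp0, hs0] using this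
  have hα : α ≠ 0 := fun h => hA (AffineEquiv.ext fun x => by simp [hA_apply x, h])
  obtain rfl : s = 2 := by
    have : (s - 2) * α = 0 := by linear_combination hpoly 0
    simpa [sub_eq_zero, hα] using this
  exact ⟨α, β, hα, fun x => by rw [hA_apply, one_mul], hB_apply⟩

/-- Every faithful representation of B(1,2) in the affine group of the
real line sends a to a nontrivial translation x ↦ x + α (α ≠ 0) and b to x ↦ 2x + β. -/
theorem BS12_affine_reps (φ : BS12 →* (ℝ ≃ᵃ[ℝ] ℝ)) (hfaith : Function.Injective φ) :
    ∃ α β : ℝ, α ≠ 0 ∧ (∀ x : ℝ, φ aBS x = x + α) ∧ (∀ x : ℝ, φ bBS x = 2 * x + β) := by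
  refine AffineEquiv.exists_of_mul_mul_inv_eq_mul_self ?_ ?_
  · simpa only [map_mul, map_inv] using congrArg φ bBS_mul_aBS_mul_bBS_inv
  · exact (map_ne_one_iff φ hfaith).2 aBS_ne_one
end

section
/- Let G be a bi-orderable group possessing elements a, b, c and positive rationals r, t, p/q with r ≠ 1 and p/q ≠ 1 such that b·a·b⁻¹ = aʳ, c·a·c⁻¹ = aᵗ, and c·b^q·c⁻¹ = b^p·w for some w commuting with a and satisfying w·a·w⁻¹ = a (all powers interpreted via rank-1 abelian subgroups containing a and b respectively). Then p = q, yielding a contradiction; hence no such configuration exists in a bi-orderable group. -/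
/-!
Say that `g` conjugates `a` to `a ^ (n / d)` when `(g a g⁻¹) ^ d = a ^ n`. This relation is
multiplicative in `g`, compatible with conjugation, and passes from `a` to its powers. Hence
`b ^ p * w` conjugates `a ^ tn` to the power `r ^ p`, while `c * b ^ q * c⁻¹` conjugates
`(c a c⁻¹) ^ td = a ^ tn` to the power `r ^ q`. Since `a ^ tn` has infinite order this exponent
is unique, so `r ^ p = r ^ q`, and `r ≠ 1` forces `p = q`.
-/

/-- `g a g⁻¹ = a ^ (n / d)`, read in a rank-one abelian subgroup containing `a`. -/
def ConjEqRatPow {G : Type*} [Group G] (g a : G) (n d : ℕ) : Prop :=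
  (g * a * g⁻¹) ^ d = a ^ n

namespace ConjEqRatPow

variable {G : Type*} [Group G] {g h a : G} {n d m e : ℕ}

theorem of_commute (hga : Commute g a) : ConjEqRatPow g a 1 1 := by
  simp [ConjEqRatPow, hga.eq]

theorem mul (hg : ConjEqRatPow g a n d) (hh : ConjEqRatPow h a m e) :
    ConjEqRatPow (g * h) a (n * m) (d * e) := by
  unfold ConjEqRatPow at *
  have hconj : g * h * a * (g * h)⁻¹ = g * (h * a * h⁻¹) * g⁻¹ := by group
  rw [hconj, mul_comm d e, pow_mul, conj_pow, hh, ← conj_pow, ← pow_mul, mul_comm, pow_mul, hg,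
    ← pow_mul]

theorem pow (hg : ConjEqRatPow g a n d) (k : ℕ) : ConjEqRatPow (g ^ k) a (n ^ k) (d ^ k) := by
  induction k with
  | zero => simp [ConjEqRatPow]
  | succ k ih => simpa only [pow_succ] using ih.mul hg

theorem pow_right (hg : ConjEqRatPow g a n d) (m : ℕ) : ConjEqRatPow g (a ^ m) n d := by
  unfold ConjEqRatPow at *
  rw [← conj_pow, ← pow_mul, mul_comm, pow_mul, hg, ← pow_mul, ← pow_mul, mul_comm]

theorem conj (hg : ConjEqRatPow g a n d) (c : G) :
    ConjEqRatPow (c * g * c⁻¹) (c * a * c⁻¹) n d := by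
  unfold ConjEqRatPow at *
  have hconj : c * g * c⁻¹ * (c * a * c⁻¹) * (c * g * c⁻¹)⁻¹ = c * (g * a * g⁻¹) * c⁻¹ := by
    group
  rw [hconj, conj_pow, hg, conj_pow]

theorem mul_eq_mul (h₁ : ConjEqRatPow g a n d) (h₂ : ConjEqRatPow g a m e)
    (ha : ¬IsOfFinOrder a) : n * e = m * d := by
  apply injective_pow_iff_not_isOfFinOrder.mpr ha
  dsimp only
  rw [pow_mul, ← h₁, pow_mul, ← h₂, ← pow_mul, ← pow_mul, mul_comm]

end ConjEqRatPow

theorem Nat.eq_of_pow_mul_pow_eq {m n p q : ℕ} (hm : 0 < m) (hn : 0 < n) (hmn : m ≠ n)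
    (h : m ^ p * n ^ q = m ^ q * n ^ p) : p = q := by
  have hn' : (0 : ℚ) < n := by exact_mod_cast hn
  refine pow_right_injective₀ (a := (m / n : ℚ)) (by positivity) ?_ ?_
  · rw [Ne, div_eq_one_iff_eq hn'.ne']; exact_mod_cast hmn
  · dsimp only
    rw [div_pow, div_pow, div_eq_div_iff (by positivity) (by positivity)]
    exact_mod_cast h

theorem no_such_configuration_general {G : Type*} [Group G]
    (htf : ∀ (g : G) (n : ℕ), g ≠ 1 → 0 < n → g ^ n ≠ 1)
    (a b c w : G) (ha : a ≠ 1)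
    (rn rd tn td p q : ℕ)
    (hrn : 0 < rn) (hrd : 0 < rd) (htn : 0 < tn)
    (hr1 : rn ≠ rd)
    (hb : (b * a * b⁻¹) ^ rd = a ^ rn)
    (hc : (c * a * c⁻¹) ^ td = a ^ tn)
    (hcb : c * b ^ q * c⁻¹ = b ^ p * w)
    (hw : w * a = a * w) :
    p = q := by
  have hb : ConjEqRatPow b a rn rd := hb
  have ha_inf : ¬IsOfFinOrder a := by
    rw [isOfFinOrder_iff_pow_eq_one]
    rintro ⟨n, hn, han⟩
    exact htf a n ha hn han
  have h_left : ConjEqRatPow (b ^ p * w) (a ^ tn) (rn ^ p) (rd ^ p) := by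
    simpa using ((hb.pow p).mul (.of_commute hw)).pow_right tn
  have h_right : ConjEqRatPow (b ^ p * w) (a ^ tn) (rn ^ q) (rd ^ q) := by
    rw [← hcb, ← hc]
    exact ((hb.pow q).conj c).pow_right td
  refine Nat.eq_of_pow_mul_pow_eq hrn hrd hr1 (h_left.mul_eq_mul h_right ?_)
  rwa [isOfFinOrder_pow, not_or, and_iff_left htn.ne']

/-- In a torsion-free group (in particular in any bi-orderable group),
suppose a ≠ 1 and there are elements b, c, w and positive rational exponents
r = rn/rd ≠ 1, t = tn/td, p/q ≠ guaranteed, realized via rank-1 abelian subgroups: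
b·a·b⁻¹ commutes with a and (b·a·b⁻¹)^rd = a^rn (i.e. b·a·b⁻¹ = aʳ),
c·a·c⁻¹ commutes with a and (c·a·c⁻¹)^td = a^tn (i.e. c·a·c⁻¹ = aᵗ),
and c·b^q·c⁻¹ = b^p·w with w commuting with a. Then p = q; hence the configuration
with p ≠ q arising for a bi-orderable group with a chain of three convex jumps is
impossible. -/
theorem no_such_configuration {G : Type*} [Group G]
    (htf : ∀ (g : G) (n : ℕ), g ≠ 1 → 0 < n → g ^ n ≠ 1)
    (a b c w : G) (ha : a ≠ 1)
    (rn rd tn td p q : ℕ)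
    (hrn : 0 < rn) (hrd : 0 < rd) (htn : 0 < tn) (htd : 0 < td)
    (hp : 0 < p) (hq : 0 < q) (hr1 : rn ≠ rd)
    (hb_comm : (b * a * b⁻¹) * a = a * (b * a * b⁻¹))
    (hb : (b * a * b⁻¹) ^ rd = a ^ rn)
    (hc_comm : (c * a * c⁻¹) * a = a * (c * a * c⁻¹))
    (hc : (c * a * c⁻¹) ^ td = a ^ tn)
    (hcb : c * b ^ q * c⁻¹ = b ^ p * w)
    (hw : w * a = a * w) :
    p = q :=
  no_such_configuration_general htf a b c w ha rn rd tn td p q hrn hrd htn hr1 hb hc hcb hw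
end
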